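/- Let N ≥ 1, let χ be a Dirichlet character modulo N with conductor f, and let c be a positive divisor of N with gcd(c, N/c) = 2. If f does not divide N/2, then χ(1 + a·(N/2)) = −1 for every odd integer a. -/

import Mathlib

/-!
Write `N = 2m` with `m` even (this is what `gcd(c, N/c) = 2` gives). For odd `a`, the residue
`1 + a·m` is `u = 1 + m`, and `u² = 1 + 2m + m² = 1` in `ℤ/Nℤ`, so `χ(u) = ±1`. The units of
`ℤ/Nℤ` that are `≡ 1 mod m` are exactly `1` and `u`, so `χ(u) = 1` would make `χ` factor through
`ℤ/mℤ`, i.e. `f ∣ m`.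
-/

theorem Nat.sq_gcd_div_dvd {c n : ℕ} (hc : c ∣ n) : Nat.gcd c (n / c) ^ 2 ∣ n :=
  calc Nat.gcd c (n / c) ^ 2 = Nat.gcd c (n / c) * Nat.gcd c (n / c) := sq _
    _ ∣ c * (n / c) := mul_dvd_mul (Nat.gcd_dvd_left _ _) (Nat.gcd_dvd_right _ _)
    _ = n := Nat.mul_div_cancel' hc

namespace ZMod

variable {m : ℕ}

theorem natCast_two_mul_self : (2 * m : ZMod (2 * m)) = 0 := by
  exact_mod_cast natCast_self (2 * m)

theorem eq_one_or_eq_one_add_of_cast_eq_one {x : ZMod (2 * m)} (hx : (x.cast : ZMod m) = 1) :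
    x = 1 ∨ x = 1 + m := by
  obtain ⟨y, rfl⟩ : ∃ y : ℤ, (y : ZMod (2 * m)) = x := ⟨x.cast, intCast_zmod_cast x⟩
  rw [cast_intCast (dvd_mul_left m 2), ← Int.cast_one, intCast_eq_intCast_iff_dvd_sub] at hx
  obtain ⟨k, hk⟩ := hx
  obtain rfl : y = 1 - m * k := by linarith
  have h0 : (2 * m : ZMod (2 * m)) = 0 := natCast_two_mul_self
  obtain ⟨j, rfl | rfl⟩ := Int.even_or_odd' k
  · left
    push_cast
    linear_combination -(j : ZMod (2 * m)) * h0
  · right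
    push_cast
    linear_combination -(j + 1 : ZMod (2 * m)) * h0

theorem sq_one_add_eq_one (hm : 2 ∣ m) : (1 + m : ZMod (2 * m)) ^ 2 = 1 := by
  obtain ⟨j, rfl⟩ := hm
  have h0 := natCast_two_mul_self (m := 2 * j)
  push_cast at h0 ⊢
  linear_combination (1 + (j : ZMod (2 * (2 * j)))) * h0

theorem intCast_one_add_mul_of_odd {a : ℤ} (ha : Odd a) :
    ((1 + a * m : ℤ) : ZMod (2 * m)) = 1 + m := by
  obtain ⟨k, rfl⟩ := ha
  push_cast
  linear_combination (k : ZMod (2 * m)) * natCast_two_mul_self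

end ZMod

namespace DirichletCharacter

section

variable {R : Type*} [CommMonoidWithZero R] {m : ℕ} [NeZero m] (χ : DirichletCharacter R (2 * m))

theorem factorsThrough_of_apply_one_add_eq_one (h : χ (1 + m) = 1) : χ.FactorsThrough m := by
  rw [factorsThrough_iff_ker_unitsMap (dvd_mul_left m 2)]
  intro x hx
  rw [MonoidHom.mem_ker, ← Units.val_eq_one, ZMod.unitsMap_val] at hx
  rw [MonoidHom.mem_ker, ← Units.val_eq_one, MulChar.coe_toUnitHom]
  rcases ZMod.eq_one_or_eq_one_add_of_cast_eq_one hx with hx | hx <;> rw [hx]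
  · exact map_one χ
  · exact h

theorem conductor_dvd_of_apply_one_add_eq_one (h : χ (1 + m) = 1) : χ.conductor ∣ m :=
  χ.conductor_dvd_of_mem_conductorSet (χ.factorsThrough_of_apply_one_add_eq_one h)

end

theorem apply_one_add_eq_neg_one {R : Type*} [CommRing R] [NoZeroDivisors R] {m : ℕ}
    (χ : DirichletCharacter R (2 * m)) (hm : 2 ∣ m) (hχ : ¬ χ.conductor ∣ m) :
    χ (1 + m) = -1 := by
  have : NeZero m := ⟨by rintro rfl; exact hχ (dvd_zero _)⟩
  have hsq : χ (1 + m) * χ (1 + m) = 1 := by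
    rw [← map_mul, ← sq, ZMod.sq_one_add_eq_one hm, map_one]
  exact (mul_self_eq_one_iff.mp hsq).resolve_left
    fun h ↦ hχ (χ.conductor_dvd_of_apply_one_add_eq_one h)

end DirichletCharacter

theorem stmt3_general (N : ℕ) (χ : DirichletCharacter ℂ N)
    (c : ℕ) (hcN : c ∣ N)
    (h2 : Nat.gcd c (N / c) = 2)
    (hf : ¬ χ.conductor ∣ N / 2) :
    ∀ a : ℤ, Odd a → χ (((1 + a * ((N / 2 : ℕ) : ℤ)) : ℤ) : ZMod N) = -1 := by
  intro a ha
  obtain ⟨m, rfl, hm⟩ : ∃ m, N = 2 * m ∧ 2 ∣ m := by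
    have h4 : 2 * 2 ∣ N := by simpa [h2] using Nat.sq_gcd_div_dvd hcN
    exact ⟨N / 2, (Nat.mul_div_cancel' (dvd_of_mul_right_dvd h4)).symm,
      Nat.dvd_div_of_mul_dvd h4⟩
  rw [Nat.mul_div_cancel_left m two_pos] at hf ⊢
  rw [ZMod.intCast_one_add_mul_of_odd ha]
  exact χ.apply_one_add_eq_neg_one hm hf

theorem stmt3 (N : ℕ) (hN : 1 ≤ N) (χ : DirichletCharacter ℂ N)
    (c : ℕ) (hc : 0 < c) (hcN : c ∣ N)
    (h2 : Nat.gcd c (N / c) = 2)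
    (hf : ¬ χ.conductor ∣ N / 2) :
    ∀ a : ℤ, Odd a → χ (((1 + a * ((N / 2 : ℕ) : ℤ)) : ℤ) : ZMod N) = -1 :=
  stmt3_general N χ c hcN h2 hf
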